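/- Let n be a natural number, C : Fin n → E, d̂ : Fin n → ℝ and P̃ ∈ E with ‖C i − P̃‖ ≤ d̂ i for every i. Then for every Q ∈ E with Q ≠ P̃, setting u := ‖Q − P̃‖⁻¹ • (Q − P̃), one has: Q belongs to the intersection of the closed balls of radius d̂ i around C i for all i if and only if dist Q P̃ ≤ R(C i, d̂ i, P̃, u) for all i. (The intersection of the challengers' disks is star-shaped about P̃, with radial function in direction u equal to the minimum of the directional uncertainties.) -/

import Mathlib

/-- The plane. -/
local notation "E" => EuclideanSpace ℝ (Fin 2)

/-- Directional uncertainty `R(C, d̂, P̃, u) = s + sqrt (d̂² − d̃² + s²)`,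
where `d̃ = ‖C − P̃‖` and `s = ⟪C − P̃, u⟫_ℝ`. -/
noncomputable def dirUnc (C Pt : EuclideanSpace ℝ (Fin 2)) (dhat : ℝ)
    (u : EuclideanSpace ℝ (Fin 2)) : ℝ :=
  (inner ℝ (C - Pt) u : ℝ) +
    Real.sqrt (dhat ^ 2 - ‖C - Pt‖ ^ 2 + (inner ℝ (C - Pt) u : ℝ) ^ 2)

/-!
Along the ray `t ↦ P̃ + t • u` the squared distance to `C` is the quadratic
`t² − 2 s t + d̃²`, which is at most `d̂²` exactly between its roots `s ± √(d̂² − d̃² + s²)`.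
Since `P̃` lies in the disk (`d̃ ≤ d̂`), the smaller root is `≤ 0`, so for `t ≥ 0` the
condition reduces to `t ≤ R`, and `Q` is the point of the ray with `t = dist Q P̃`.
-/

open Real RealInnerProductSpace

lemma sub_sq_le_iff_le_add_sqrt {s t D : ℝ} (hs : s ^ 2 ≤ D) (ht : 0 ≤ t) :
    (t - s) ^ 2 ≤ D ↔ t ≤ s + √D := by
  have hs_abs : |s| ≤ √D := abs_le_sqrt hs
  rw [Real.sq_le ((sq_nonneg s).trans hs)]
  constructor
  · rintro ⟨-, h⟩
    linarith
  · intro h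
    constructor <;> linarith [le_abs_self s]

section RayBall

variable {F : Type*} [NormedAddCommGroup F] [InnerProductSpace ℝ F]

lemma norm_smul_sub_sq {u : F} (hu : ‖u‖ = 1) (t : ℝ) (v : F) :
    ‖t • u - v‖ ^ 2 = t ^ 2 - 2 * t * ⟪v, u⟫ + ‖v‖ ^ 2 := by
  rw [norm_sub_sq_real, norm_smul, inner_smul_left, real_inner_comm, mul_pow, hu]
  simp only [Real.norm_eq_abs, sq_abs, conj_trivial]
  ring

lemma dist_add_smul_le_iff {P C u : F} {d t : ℝ} (hu : ‖u‖ = 1) (ht : 0 ≤ t)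
    (hP : ‖C - P‖ ≤ d) :
    dist (P + t • u) C ≤ d ↔
      t ≤ ⟪C - P, u⟫ + √(d ^ 2 - ‖C - P‖ ^ 2 + ⟪C - P, u⟫ ^ 2) := by
  have hd : 0 ≤ d := (norm_nonneg _).trans hP
  have hsq : ‖C - P‖ ^ 2 ≤ d ^ 2 := pow_le_pow_left₀ (norm_nonneg _) hP 2
  rw [← sub_sq_le_iff_le_add_sqrt (by linarith) ht, dist_eq_norm,
    show P + t • u - C = t • u - (C - P) by abel,
    ← pow_le_pow_iff_left₀ (norm_nonneg _) hd two_ne_zero, norm_smul_sub_sq hu]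
  constructor <;> intro h <;> linarith

end RayBall

/-- The intersection of the challengers' disks is star-shaped about `P̃`: a
point `Q ≠ P̃` lies in all the closed balls of radius `d̂ i` around `C i` iff
its distance to `P̃` is at most every directional uncertainty in the direction
of `Q` from `P̃`. -/
theorem intersection_star_shaped (n : ℕ) (C : Fin n → E) (dhat : Fin n → ℝ)
    (Pt : E) (h : ∀ i, ‖C i - Pt‖ ≤ dhat i) (Q : E) (hQ : Q ≠ Pt) :
    (∀ i, Q ∈ Metric.closedBall (C i) (dhat i)) ↔
      ∀ i, dist Q Pt ≤ dirUnc (C i) Pt (dhat i) (‖Q - Pt‖⁻¹ • (Q - Pt)) := by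
  set u : E := ‖Q - Pt‖⁻¹ • (Q - Pt)
  have hu : ‖u‖ = 1 := norm_smul_inv_norm (sub_ne_zero.mpr hQ)
  have hQ_ray : Q = Pt + dist Q Pt • u := by
    rw [dist_eq_norm, smul_inv_smul₀ (norm_ne_zero_iff.mpr (sub_ne_zero.mpr hQ)),
      add_sub_cancel]
  refine forall_congr' fun i => ?_
  rw [Metric.mem_closedBall, dirUnc, ← dist_add_smul_le_iff hu dist_nonneg (h i), ← hQ_ray]
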